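/- arXiv:2512.13201 — 2 statements merged into one kernel-verified Lean document; each statement's English description precedes it below -/
import Mathlib

section
/- Let ψ be a unit vector in C^d and define G(i,k) = Σ_{r=0}^{d−1} conj(ψ_{r+i})·conj(ψ_{r+k})·ψ_r·ψ_{r+i+k} (indices mod d). Then |⟨ψ|X^iZ^j|ψ⟩|² = (d·δ_{i,0}δ_{j,0} + 1)/(d+1) for all i,j if and only if G(i,k) = (δ_{i,0} + δ_{k,0})/(d+1) for all i,k. -/
open Matrix Finset ComplexConjugate

noncomputable section

/-- ω = exp(2πi/d) -/
def omg (d : ℕ) : ℂ := Complex.exp (2 * Real.pi * Complex.I / d)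

/-- τ = -exp(πi/d) -/
def tau (d : ℕ) : ℂ := -Complex.exp (Real.pi * Complex.I / d)

/-- The clock matrix `Z`, with `Z|r⟩ = ω^r |r⟩`. -/
def Zmat (d : ℕ) [NeZero d] : Matrix (ZMod d) (ZMod d) ℂ :=
  Matrix.diagonal fun r => omg d ^ r.val

/-- The shift matrix `X`, with `X|r⟩ = |r+1⟩` (indices mod d). -/
def Xmat (d : ℕ) [NeZero d] : Matrix (ZMod d) (ZMod d) ℂ :=
  Matrix.of fun r s => if r = s + 1 then 1 else 0

/-- The displacement operators `D_{j,k} = τ^{jk} X^j Z^k`. -/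
def Dmat (d : ℕ) [NeZero d] (j k : ZMod d) : Matrix (ZMod d) (ZMod d) ℂ :=
  tau d ^ (j.val * k.val) • (Xmat d ^ j.val * Zmat d ^ k.val)

/-- Standard Hermitian inner product, conjugate-linear in the first argument. -/
def ip {d : ℕ} [NeZero d] (u w : ZMod d → ℂ) : ℂ := ∑ k, conj (u k) * w k

/-!
For fixed `i`, the overlap `⟨ψ|X^i Z^j|ψ⟩` is, as a function of `j`, the discrete Fourier
transform of `a_i(s) = conj ψ(s+i) ψ(s)`. By Wiener–Khinchin its squared modulus is the Fourier
transform of the autocorrelation of `a_i`, and that autocorrelation is `t ↦ G(i,t)`. The Fourier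
transform of `t ↦ (δ_{i,0} + δ_{t,0})/(d+1)` is `j ↦ (d δ_{i,0} δ_{j,0} + 1)/(d+1)`, so the two
families of conditions are equivalent because the DFT is injective.
-/

open ZMod

section DFT

variable {N : ℕ} [NeZero N]

def autocorrelation (a : ZMod N → ℂ) (t : ZMod N) : ℂ := ∑ u, a u * conj (a (u + t))

lemma sum_stdAddChar_mul (k : ZMod N) :
    ∑ j : ZMod N, stdAddChar (j * k) = if k = 0 then (N : ℂ) else 0 := by
  rw [AddChar.sum_mulShift k (isPrimitive_stdAddChar N), ZMod.card, Nat.cast_ite, Nat.cast_zero]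

lemma dft_const {E : Type*} [AddCommGroup E] [Module ℂ E] (c : E) (k : ZMod N) :
    𝓕 (fun _ ↦ c) k = if k = 0 then (N : ℂ) • c else 0 := by
  simp_rw [dft_apply, ← Finset.sum_smul, ← mul_neg, sum_stdAddChar_mul, neg_eq_zero, ite_smul,
    zero_smul]

lemma dft_ite_eq_zero {E : Type*} [AddCommGroup E] [Module ℂ E] (b : E) (k : ZMod N) :
    𝓕 (fun t ↦ if t = 0 then b else 0) k = b := by
  simp [dft_apply]

/-- Wiener–Khinchin: the power spectrum is the Fourier transform of the autocorrelation. -/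
lemma normSq_dft_neg (a : ZMod N → ℂ) (k : ZMod N) :
    ((‖𝓕 a (-k)‖ ^ 2 : ℝ) : ℂ) = 𝓕 (autocorrelation a) k := by
  push_cast
  rw [← Complex.mul_conj', dft_apply, map_sum, Finset.sum_mul_sum]
  simp_rw [dft_apply, autocorrelation, Finset.smul_sum]
  conv_rhs => rw [Finset.sum_comm]
  refine Finset.sum_congr rfl fun u _ ↦ ?_
  rw [← Equiv.sum_comp (Equiv.addLeft u)]
  refine Finset.sum_congr rfl fun t _ ↦ ?_
  simp only [smul_eq_mul, map_mul, ← AddChar.map_neg_eq_conj, Equiv.coe_addLeft]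
  rw [mul_mul_mul_comm, ← AddChar.map_add_eq_mul]
  ring_nf

end DFT

section ShiftClock

variable {d : ℕ} [NeZero d]

lemma omg_pow_eq_stdAddChar (n : ℕ) : omg d ^ n = stdAddChar (n : ZMod d) := by
  rw [omg, ← Complex.exp_nat_mul, stdAddChar_apply, toCircle_natCast]
  ring_nf

lemma Zmat_pow_mulVec (n : ℕ) (v : ZMod d → ℂ) (r : ZMod d) :
    (Zmat d ^ n *ᵥ v) r = stdAddChar (r * (n : ZMod d)) * v r := by
  rw [Zmat, diagonal_pow, mulVec_diagonal, Pi.pow_apply, ← pow_mul, omg_pow_eq_stdAddChar,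
    Nat.cast_mul, natCast_zmod_val]

lemma Xmat_mulVec (v : ZMod d → ℂ) (r : ZMod d) : (Xmat d *ᵥ v) r = v (r - 1) := by
  simp [Xmat, mulVec, dotProduct, ← sub_eq_iff_eq_add]

lemma Xmat_pow_mulVec (n : ℕ) (v : ZMod d → ℂ) (r : ZMod d) :
    (Xmat d ^ n *ᵥ v) r = v (r - n) := by
  induction n generalizing r with
  | zero => simp
  | succ n ih =>
    rw [pow_succ', ← mulVec_mulVec, Xmat_mulVec, ih]
    push_cast
    ring_nf

lemma ip_Xmat_pow_Zmat_pow_mulVec (ψ : ZMod d → ℂ) (i j : ZMod d) :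
    ip ψ ((Xmat d ^ i.val * Zmat d ^ j.val) *ᵥ ψ) = 𝓕 (fun s ↦ conj (ψ (s + i)) * ψ s) (-j) := by
  rw [ip, dft_apply, ← Equiv.sum_comp (Equiv.addRight i)]
  refine Finset.sum_congr rfl fun s _ ↦ ?_
  simp only [← mulVec_mulVec, Xmat_pow_mulVec, Zmat_pow_mulVec, natCast_zmod_val,
    Equiv.coe_addRight, add_sub_cancel_right, mul_neg, neg_neg, smul_eq_mul]
  ring

lemma autocorrelation_conj_shift_mul (ψ : ZMod d → ℂ) (i k : ZMod d) :
    autocorrelation (fun s ↦ conj (ψ (s + i)) * ψ s) k =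
      ∑ r : ZMod d, conj (ψ (r + i)) * conj (ψ (r + k)) * ψ r * ψ (r + i + k) := by
  refine Finset.sum_congr rfl fun r _ ↦ ?_
  rw [map_mul, Complex.conj_conj, add_right_comm]
  ring

lemma dft_sic_profile (i k : ZMod d) :
    𝓕 (fun t ↦ ((if i = 0 then 1 else 0) + (if t = 0 then 1 else 0)) / ((d : ℂ) + 1)) k =
      (((d : ℝ) * (if i = 0 then 1 else 0) * (if k = 0 then 1 else 0) + 1) / (d + 1) : ℝ) := by
  have hsplit : (fun t : ZMod d ↦ ((if i = 0 then 1 else 0) + (if t = 0 then 1 else 0)) /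
      ((d : ℂ) + 1)) = (fun _ ↦ (if i = 0 then 1 else 0) / ((d : ℂ) + 1)) +
        (fun t ↦ if t = 0 then 1 / ((d : ℂ) + 1) else 0) := by
    ext t
    simp only [Pi.add_apply, add_div, ite_div, zero_div]
  rw [hsplit, map_add, Pi.add_apply, dft_const, dft_ite_eq_zero]
  split_ifs <;> push_cast <;> ring

end ShiftClock

theorem sic_iff_G_general (d : ℕ) [NeZero d] (ψ : ZMod d → ℂ) :
    (∀ i j : ZMod d,
        ‖ip ψ ((Xmat d ^ i.val * Zmat d ^ j.val) *ᵥ ψ)‖ ^ 2 =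
          ((d : ℝ) * (if i = 0 then 1 else 0) * (if j = 0 then 1 else 0) + 1) / (d + 1)) ↔
    (∀ i k : ZMod d,
        (∑ r : ZMod d, conj (ψ (r + i)) * conj (ψ (r + k)) * ψ r * ψ (r + i + k)) =
          ((if i = 0 then 1 else 0) + (if k = 0 then 1 else 0)) / ((d : ℂ) + 1)) := by
  refine forall_congr' fun i ↦ ?_
  set a : ZMod d → ℂ := fun s ↦ conj (ψ (s + i)) * ψ s
  set sic : ZMod d → ℂ :=
    fun t ↦ ((if i = 0 then 1 else 0) + (if t = 0 then 1 else 0)) / ((d : ℂ) + 1)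
  calc _ ↔ ∀ j, 𝓕 (autocorrelation a) j = 𝓕 sic j := by
        refine forall_congr' fun j ↦ ?_
        rw [ip_Xmat_pow_Zmat_pow_mulVec, ← Complex.ofReal_inj, normSq_dft_neg, dft_sic_profile]
    _ ↔ autocorrelation a = sic := by rw [← funext_iff, dft.injective.eq_iff]
    _ ↔ _ := by simp only [funext_iff, a, sic, autocorrelation_conj_shift_mul]

/-- for a unit vector ψ, the SIC overlap conditions
`|⟨ψ|X^iZ^j|ψ⟩|² = (d δ_{i,0} δ_{j,0} + 1)/(d+1)` hold for all i,j if and only if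
`G(i,k) = (δ_{i,0} + δ_{k,0})/(d+1)` for all i,k. -/
theorem sic_iff_G (d : ℕ) [NeZero d] (ψ : ZMod d → ℂ) (hψ : ip ψ ψ = 1) :
    (∀ i j : ZMod d,
        ‖ip ψ ((Xmat d ^ i.val * Zmat d ^ j.val) *ᵥ ψ)‖ ^ 2 =
          ((d : ℝ) * (if i = 0 then 1 else 0) * (if j = 0 then 1 else 0) + 1) / (d + 1)) ↔
    (∀ i k : ZMod d,
        (∑ r : ZMod d, conj (ψ (r + i)) * conj (ψ (r + k)) * ψ r * ψ (r + i + k)) =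
          ((if i = 0 then 1 else 0) + (if k = 0 then 1 else 0)) / ((d : ℂ) + 1)) :=
  sic_iff_G_general d ψ
end
end

section
/- Let d = p ≡ 7 (mod 8) be prime and let v be the Legendre vector built from a unimodular x₁ and √x₀ (x₀ = −2−√(d+1)). Then for every j ≠ 0 with (j/d) = 1, ⟨v|X^{−2j}|v⟩ = (d−3)/2 − ((d+1)/4)·(1/x₁²) − ((d−3)/4)·x₁² − 2√x₀·x₁. -/
/-!
Off the origin the Legendre vector is `v = a + b χ` with `χ` the quadratic character,
`a = (x₁ - 1/x₁)/2` and `b = (x₁ + 1/x₁)/2`; since `|x₁| = 1`, `conj a = -a` and `conj b = b`.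
Thus `⟨v|X^{-c}|v⟩ = ∑ₖ conj (v k) v (k + c)` is, apart from the two terms `k = 0` and `k = -c`
that involve `v 0 = √x₀`, a combination of `∑ χ = 0` and of the autocorrelation
`∑ₖ χ(k) χ(k + c) = -1`, which is the Jacobi sum `J(χ, χ⁻¹) = -χ(-1)` after the substitution
`k = -c x`. For `c = 2j` with `j` a nonzero square and `p ≡ 7 (mod 8)` we have `χ(c) = 1`
(2 is a square) and `χ(-c) = -1` (`p ≡ 3 (mod 4)`), which gives the stated values.
-/

open Matrix Finset ComplexConjugate

noncomputable section

section QuadraticChar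

variable {F : Type*} [Field F] [Fintype F] [DecidableEq F]

theorem quadraticChar_sum_mul_add (hF : ringChar F ≠ 2) {c : F} (hc : c ≠ 0) :
    ∑ r, quadraticChar F r * quadraticChar F (r + c) = -1 := by
  set χ := quadraticChar F
  have hJ : jacobiSum χ χ = -χ (-1) := by
    have h := jacobiSum_nontrivial_inv (quadraticChar_ne_one hF)
    rwa [(quadraticChar_isQuadratic F).inv] at h
  have hχneg : χ (-1) ^ 2 = 1 := quadraticChar_sq_one (neg_ne_zero.2 one_ne_zero)
  calc ∑ r, χ r * χ (r + c) = ∑ x, χ (-c * x) * χ (-c * x + c) :=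
        (Equiv.sum_comp (Equiv.mulLeft₀ (-c) (neg_ne_zero.2 hc)) fun r => χ r * χ (r + c)).symm
    _ = χ (-1) * jacobiSum χ χ := by
        rw [jacobiSum, mul_sum]
        refine sum_congr rfl fun x _ => ?_
        have hc2 : χ c ^ 2 = 1 := quadraticChar_sq_one hc
        rw [show -c * x + c = c * (1 - x) by ring, show -c * x = -1 * c * x by ring]
        simp only [map_mul]
        linear_combination (χ (-1) * χ x * χ (1 - x)) * hc2
    _ = -1 := by rw [hJ]; linear_combination -hχneg

theorem eq_add_mul_quadraticChar {v : F → ℂ} {x y : ℂ}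
    (hsq : ∀ r ≠ 0, IsSquare r → v r = x) (hns : ∀ r ≠ 0, ¬IsSquare r → v r = y)
    {r : F} (hr : r ≠ 0) :
    v r = (x + y) / 2 + (x - y) / 2 * quadraticChar F r := by
  by_cases h : IsSquare r
  · rw [hsq r hr h, (quadraticChar_one_iff_isSquare hr).2 h]; push_cast; ring
  · rw [hns r hr h, quadraticChar_neg_one_iff_not_isSquare.2 h]; push_cast; ring

theorem sum_conj_mul_add_of_eq_add_mul_quadraticChar (hF : ringChar F ≠ 2) {v : F → ℂ}
    {a b : ℂ} (hv : ∀ r ≠ 0, v r = a + b * quadraticChar F r) {c : F} (hc : c ≠ 0) :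
    ∑ k, conj (v k) * v (k + c) =
      conj (v 0) * v c + conj (v (-c)) * v 0 + (Fintype.card F - 2) * conj a * a
        - conj a * b * quadraticChar F c - conj b * a * quadraticChar F (-c) - conj b * b := by
  set χ := quadraticChar F
  set S := univ \ {0, -c}
  have hsplit {M : Type} [AddCommGroup M] (g : F → M) :
      ∑ k ∈ S, g k = ∑ k, g k - g 0 - g (-c) := by
    rw [← sum_sdiff (subset_univ {0, -c}), sum_pair (neg_ne_zero.2 hc).symm]; abel
  have hterm : ∀ k ∈ S, conj (v k) * v (k + c) = conj a * a + conj a * b * χ (k + c)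
      + conj b * a * χ k + conj b * b * ((χ k * χ (k + c) : ℤ) : ℂ) := by
    intro k hk
    simp only [S, mem_sdiff, mem_univ, mem_insert, mem_singleton, not_or, true_and] at hk
    rw [hv k hk.1, hv (k + c) fun h => hk.2 (eq_neg_of_add_eq_zero_left h)]
    simp only [map_add, map_mul, map_intCast, Int.cast_mul]
    ring
  have hcard : (#S : ℂ) = Fintype.card F - 2 := by
    have := hsplit fun _ => (1 : ℂ)
    simp only [sum_const, card_univ, nsmul_eq_mul, mul_one] at this
    rw [this]; ring
  have hχS : ∑ k ∈ S, χ k = -χ (-c) := by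
    rw [hsplit, quadraticChar_sum_zero hF, quadraticChar_zero]; ring
  have hχshiftS : ∑ k ∈ S, χ (k + c) = -χ c := by
    rw [hsplit, Fintype.sum_equiv (Equiv.addRight c) (fun k => χ (k + c)) χ fun _ => rfl,
      quadraticChar_sum_zero hF, zero_add, neg_add_cancel, quadraticChar_zero]; ring
  have hχmulS : ∑ k ∈ S, χ k * χ (k + c) = -1 := by
    rw [hsplit, quadraticChar_sum_mul_add hF hc, neg_add_cancel, quadraticChar_zero]; ring
  have htotal := hsplit fun k => conj (v k) * v (k + c)
  rw [eq_sub_iff_add_eq, eq_sub_iff_add_eq] at htotal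
  rw [← htotal, sum_congr rfl hterm]
  simp only [sum_add_distrib, ← mul_sum, sum_const, nsmul_eq_mul, hcard, zero_add,
    neg_add_cancel, ← Int.cast_sum, hχS, hχshiftS, hχmulS]
  push_cast
  ring

end QuadraticChar

theorem Xmat_mulVec_apply {d : ℕ} [NeZero d] (w : ZMod d → ℂ) (r : ZMod d) :
    (Xmat d *ᵥ w) r = w (r - 1) := by
  have h (i : ZMod d) : r = i + 1 ↔ i = r - 1 := by rw [eq_sub_iff_add_eq, eq_comm]
  simp only [Xmat, mulVec, dotProduct, of_apply, h, ite_mul, one_mul, zero_mul, sum_ite_eq',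
    mem_univ, if_true]

theorem Xmat_pow_mulVec_apply {d : ℕ} [NeZero d] (n : ℕ) (w : ZMod d → ℂ) (r : ZMod d) :
    (Xmat d ^ n *ᵥ w) r = w (r - n) := by
  induction n generalizing r with
  | zero => simp
  | succ n ih =>
    rw [pow_succ', ← mulVec_mulVec, Xmat_mulVec_apply, ih, Nat.cast_succ, sub_sub, add_comm]

/-- for d = p ≡ 7 (mod 8) prime and v the Legendre vector, for every
j ≠ 0 with (j/d) = 1 we have
`⟨v|X^{−2j}|v⟩ = (d−3)/2 − ((d+1)/4)(1/x₁²) − ((d−3)/4)x₁² − 2√x₀·x₁`. -/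
theorem legendre_vector_xoverlap_7mod8 (p : ℕ) [NeZero p] (hp : p.Prime) (hp8 : p % 8 = 7)
    (x₁ : ℂ) (hx₁ : ‖x₁‖ = 1) (v : ZMod p → ℂ)
    (hv0 : v 0 = Complex.I * Real.sqrt (2 + Real.sqrt (p + 1)))
    (hvQ : ∀ j : ZMod p, j ≠ 0 → IsSquare j → v j = x₁)
    (hvN : ∀ j : ZMod p, j ≠ 0 → ¬IsSquare j → v j = -1 / x₁) :
    ∀ j : ZMod p, j ≠ 0 → IsSquare j →
      ip v ((Xmat p ^ (-2 * j : ZMod p).val) *ᵥ v) =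
        ((p : ℂ) - 3) / 2 - (((p : ℂ) + 1) / 4) * (1 / x₁ ^ 2)
          - (((p : ℂ) - 3) / 4) * x₁ ^ 2
          - 2 * (Complex.I * Real.sqrt (2 + Real.sqrt (p + 1))) * x₁ := by
  intro j hj hsqj
  have := Fact.mk hp
  have hF : ringChar (ZMod p) ≠ 2 := by rw [ZMod.ringChar_zmod_n]; omega
  have hc : 2 * j ≠ 0 := mul_ne_zero (Ring.two_ne_zero hF) hj
  have hsqc : IsSquare (2 * j) := ((ZMod.exists_sq_eq_two_iff (by omega)).2 (Or.inr hp8)).mul hsqj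
  have hχc : quadraticChar (ZMod p) (2 * j) = 1 := (quadraticChar_one_iff_isSquare hc).2 hsqc
  have hχnegc : quadraticChar (ZMod p) (-(2 * j)) = -1 := by
    rw [neg_eq_neg_one_mul, map_mul, hχc, quadraticChar_neg_one hF, ZMod.card,
      ZMod.χ₄_nat_three_mod_four (by omega), mul_one]
  have hshift (k : ZMod p) : (Xmat p ^ (-2 * j : ZMod p).val *ᵥ v) k = v (k + 2 * j) := by
    rw [Xmat_pow_mulVec_apply, ZMod.natCast_zmod_val, neg_mul, sub_neg_eq_add]
  simp only [ip, hshift]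
  rw [sum_conj_mul_add_of_eq_add_mul_quadraticChar hF
      (fun r hr => eq_add_mul_quadraticChar hvQ hvN hr) hc, hvQ _ hc hsqc,
    hvN _ (neg_ne_zero.2 hc) (quadraticChar_neg_one_iff_not_isSquare.1 hχnegc), hχc, hχnegc, hv0,
    ZMod.card]
  simp only [map_mul, map_div₀, map_add, map_sub, map_neg, map_one, map_ofNat, Complex.conj_I,
    Complex.conj_ofReal, ← Complex.inv_eq_conj hx₁]
  have hx₁0 : x₁ ≠ 0 := by rintro rfl; simp at hx₁
  field_simp
  ring
end
end
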